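/- For any configuration on ℤ^{d+1} and any u = (b,0) ∈ 𝕃: if M_u = ∅, or if M_u ≠ ∅ and l_u^+(M_u) is finite, then the site (b, F_+(u)) is open; likewise, if M_u = ∅, or if M_u ≠ ∅ and l_u^−(M_u) is finite, then the site (b, F_−(u)) is open. -/
import Mathlib


open MeasureTheory
open scoped ENNReal

noncomputable section

/-- A site of `ℤ^{d+1}`: a base in `ℤ^d` and a height in `ℤ`. -/
abbrev Site (d : ℕ) := (Fin d → ℤ) × ℤ

/-- `Sign(x)`: `{1}` if `x > 0`, `{-1}` if `x < 0`, `{-1, 1}` if `x = 0`. -/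
def signSet (x : ℤ) : Set ℤ := if 0 < x then {1} else if x < 0 then {-1} else {-1, 1}

/-- `ℓ¹`-distance between two bases. -/
def l1 {d : ℕ} (b b' : Fin d → ℤ) : ℤ := ∑ j, |b j - b' j|

/-- `ℓ¹`-distance between two sites. -/
def dist1 {d : ℕ} (u v : Site d) : ℤ := l1 u.1 v.1 + |u.2 - v.2|

/-- A single move of a d-path: either a vertical move into a closed site,
or a diagonal move towards the zero-height hyperplane. -/
def DStep {d : ℕ} (ω : Site d → Bool) (p q : Site d) : Prop :=
  (q.1 = p.1 ∧ (q.2 - p.2) ∈ signSet p.2 ∧ ω q = true) ∨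
  (l1 q.1 p.1 = 1 ∧ (p.2 - q.2) ∈ signSet p.2 ∧ p.2 ≠ 0)

/-- There is a d-path from `u` (a closed site of the zero-height hyperplane) to `v`. -/
def IsDPath {d : ℕ} (ω : Site d → Bool) (u v : Site d) : Prop :=
  u.2 = 0 ∧ ω u = true ∧
  ∃ (k : ℕ) (p : Fin (k + 1) → Site d), Function.Injective p ∧
    p 0 = u ∧ p (Fin.last k) = v ∧
    ∀ i : Fin k, DStep ω (p i.castSucc) (p i.succ)

/-- `hat v`: sites with the same base as `v` but further from the zero-height hyperplane. -/
def hatSet {d : ℕ} (v : Site d) : Set (Site d) :=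
  {w | w.1 = v.1 ∧ 0 ≤ v.2 * w.2 ∧ |v.2| ≤ |w.2|}

/-- `u ↣ v`: there is a d-path from `u` to some site of `hat v`. -/
def reaches {d : ℕ} (ω : Site d → Bool) (u v : Site d) : Prop :=
  ∃ w ∈ hatSet v, IsDPath ω u w

/-- The hill around `u`. -/
def hill {d : ℕ} (ω : Site d → Bool) (u : Site d) : Set (Site d) := {v | reaches ω u v}

/-- The mountain around `v`: the union of all hills (around sites of the zero-height
hyperplane) containing `v`. -/
def mountain {d : ℕ} (ω : Site d → Bool) (v : Site d) : Set (Site d) :=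
  {w | ∃ u : Site d, u.2 = 0 ∧ v ∈ hill ω u ∧ w ∈ hill ω u}

/-- Positive depth `l_u^+(S)`. -/
def depthPlus {d : ℕ} (u : Site d) (S : Set (Site d)) : ℕ∞ :=
  ⨆ k ∈ {k : ℕ | ((u.1, u.2 + (k : ℤ)) : Site d) ∈ S}, (k : ℕ∞)

/-- Negative depth `l_u^-(S)`. -/
def depthMinus {d : ℕ} (u : Site d) (S : Set (Site d)) : ℕ∞ :=
  ⨆ k ∈ {k : ℕ | ((u.1, u.2 - (k : ℤ)) : Site d) ∈ S}, (k : ℕ∞)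

/-- Radius `rad_u(S) = sup {‖v - u‖₁ : v ∈ S}`, valued in `ℝ≥0∞`. -/
def radius {d : ℕ} (u : Site d) (S : Set (Site d)) : ℝ≥0∞ :=
  ⨆ v ∈ S, ((dist1 u v).toNat : ℝ≥0∞)

open Classical in
/-- `F₊(b) = 1 + l_{(b,0)}^+(M_{(b,0)})` if the mountain is nonempty, `0` otherwise. -/
def Fplus {d : ℕ} (ω : Site d → Bool) (b : Fin d → ℤ) : ℤ :=
  if (mountain ω (b, 0)).Nonempty then
    1 + ((depthPlus ((b, 0) : Site d) (mountain ω (b, 0))).toNat : ℤ)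
  else 0

open Classical in
/-- `F₋(b) = -1 - l_{(b,0)}^-(M_{(b,0)})` if the mountain is nonempty, `0` otherwise. -/
def Fminus {d : ℕ} (ω : Site d → Bool) (b : Fin d → ℤ) : ℤ :=
  if (mountain ω (b, 0)).Nonempty then
    -1 - ((depthMinus ((b, 0) : Site d) (mountain ω (b, 0))).toNat : ℤ)
  else 0

/-- Shift of a configuration by a site `s`. -/
def shift {d : ℕ} (s : Site d) (ω : Site d → Bool) : Site d → Bool := fun v => ω (v + s)

/-- The origin of the zero-height hyperplane. -/
def origin (d : ℕ) : Site d := (0, 0)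


/- ===== auxiliary lemmas ===== -/
section Aux

open Relation

variable {d : ℕ}

lemma l1_nonneg (a b : Fin d → ℤ) : 0 ≤ l1 a b :=
  Finset.sum_nonneg fun _ _ => abs_nonneg _

lemma l1_self (a : Fin d → ℤ) : l1 a a = 0 := by simp [l1]

lemma l1_eq_zero {a b : Fin d → ℤ} (h : l1 a b = 0) : a = b := by
  funext i
  have h2 := (Finset.sum_eq_zero_iff_of_nonneg
    (fun i _ => abs_nonneg (a i - b i))).mp h i (Finset.mem_univ i)
  have := abs_eq_zero.mp h2
  omega

lemma l1_triangle (a b c : Fin d → ℤ) : l1 a c ≤ l1 a b + l1 b c := by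
  rw [l1, l1, l1, ← Finset.sum_add_distrib]
  exact Finset.sum_le_sum fun i _ => abs_sub_le _ _ _

lemma l1_update (z x : Fin d → ℤ) (j : Fin d) (c : ℤ) :
    l1 z (Function.update x j c) = l1 z x - |z j - x j| + |z j - c| := by
  have key : ∀ i, |z i - Function.update x j c i|
      = Function.update (fun i => |z i - x i|) j (|z j - c|) i := by
    intro i
    by_cases h : i = j
    · subst h; simp
    · simp [Function.update, h]
  unfold l1
  rw [Finset.sum_congr rfl (fun i _ => key i),
    Finset.sum_update_of_mem (Finset.mem_univ j)]
  rw [Finset.sdiff_singleton_eq_erase,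
    ← Finset.add_sum_erase Finset.univ (fun i => |z i - x i|) (Finset.mem_univ j)]
  ring

lemma l1_update_left (x : Fin d → ℤ) (j : Fin d) (c : ℤ) :
    l1 (Function.update x j c) x = |c - x j| := by
  have key : ∀ i, |Function.update x j c i - x i|
      = Function.update (fun _ => (0:ℤ)) j (|c - x j|) i := by
    intro i
    by_cases h : i = j
    · subst h; simp
    · simp [Function.update, h]
  unfold l1
  rw [Finset.sum_congr rfl (fun i _ => key i),
    Finset.sum_update_of_mem (Finset.mem_univ j)]
  simp

lemma one_mem_signSet {x : ℤ} (hx : 0 ≤ x) : (1:ℤ) ∈ signSet x := by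
  unfold signSet
  split_ifs with h1 h2
  · rfl
  · omega
  · exact Or.inr rfl

lemma neg_one_mem_signSet {x : ℤ} (hx : x ≤ 0) : (-1:ℤ) ∈ signSet x := by
  unfold signSet
  split_ifs with h1 h2
  · omega
  · rfl
  · exact Or.inl rfl

lemma signSet_elim {x y : ℤ} (h : y ∈ signSet x) :
    (y = 1 ∧ 0 ≤ x) ∨ (y = -1 ∧ x ≤ 0) := by
  unfold signSet at h
  split_ifs at h with h1 h2
  · exact Or.inl ⟨h, by omega⟩
  · exact Or.inr ⟨h, by omega⟩
  · rcases h with h | h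
    · exact Or.inr ⟨h, by omega⟩
    · exact Or.inl ⟨h, by omega⟩

/-- From a walk one can extract an injective d-path (loop erasure). -/
lemma walk_to_path (ω : Site d → Bool) {u v : Site d}
    (h : Relation.ReflTransGen (DStep ω) u v) :
    ∃ (k : ℕ) (p : Fin (k + 1) → Site d), Function.Injective p ∧
      p 0 = u ∧ p (Fin.last k) = v ∧ ∀ i : Fin k, DStep ω (p i.castSucc) (p i.succ) := by
  induction h with
  | refl =>
    exact ⟨0, fun _ => u, fun a b _ => Fin.ext (by omega), rfl, rfl, fun i => i.elim0⟩
  | @tail w c hab hbc ih =>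
    obtain ⟨k, p, hinj, h0, hl, hs⟩ := ih
    by_cases hc : ∃ j : Fin (k+1), p j = c
    · obtain ⟨j, hj⟩ := hc
      have hjk : j.1 ≤ k := Nat.lt_succ_iff.mp j.isLt
      have hjk1 : j.1 + 1 ≤ k + 1 := Nat.succ_le_succ hjk
      refine ⟨j.1, fun i => p (Fin.castLE hjk1 i),
        hinj.comp (Fin.castLE_injective _), ?_, ?_, ?_⟩
      · simpa using h0
      · show p (Fin.castLE hjk1 (Fin.last j.1)) = c
        have : (Fin.castLE hjk1 (Fin.last j.1)) = j := by
          ext; simp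
        rw [this, hj]
      · intro i
        have hik : i.1 < k := lt_of_lt_of_le i.isLt hjk
        have h1 : (Fin.castLE hjk1 i.castSucc)
            = (⟨i.1, hik⟩ : Fin k).castSucc := by ext; simp
        have h2 : (Fin.castLE hjk1 i.succ)
            = (⟨i.1, hik⟩ : Fin k).succ := by ext; simp
        show DStep ω (p (Fin.castLE hjk1 i.castSucc)) (p (Fin.castLE hjk1 i.succ))
        rw [h1, h2]
        exact hs _
    · push_neg at hc
      refine ⟨k+1, Fin.snoc p c, ?_, ?_, ?_, ?_⟩
      · intro a b hab'
        rcases Fin.eq_castSucc_or_eq_last a with ⟨a', rfl⟩ | rfl <;>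
          rcases Fin.eq_castSucc_or_eq_last b with ⟨b', rfl⟩ | rfl
        · rw [Fin.snoc_castSucc, Fin.snoc_castSucc] at hab'
          exact congrArg _ (hinj hab')
        · rw [Fin.snoc_castSucc, Fin.snoc_last] at hab'
          exact absurd hab' (hc a')
        · rw [Fin.snoc_castSucc, Fin.snoc_last] at hab'
          exact absurd hab'.symm (hc b')
        · rfl
      · have : (0 : Fin (k+2)) = Fin.castSucc 0 := rfl
        rw [this, Fin.snoc_castSucc, h0]
      · rw [Fin.snoc_last]
      · intro i
        rcases Fin.eq_castSucc_or_eq_last i with ⟨i', rfl⟩ | rfl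
        · rw [Fin.succ_castSucc, Fin.snoc_castSucc, Fin.snoc_castSucc]
          exact hs i'
        · rw [Fin.succ_last, Fin.snoc_last]
          have : (Fin.last k).castSucc = Fin.castSucc (Fin.last k) := rfl
          rw [this, Fin.snoc_castSucc, hl]
          exact hbc

/-- From a d-path one can get a walk. -/
lemma path_to_walk (ω : Site d → Bool) {u v : Site d}
    (h : ∃ (k : ℕ) (p : Fin (k + 1) → Site d), Function.Injective p ∧
      p 0 = u ∧ p (Fin.last k) = v ∧ ∀ i : Fin k, DStep ω (p i.castSucc) (p i.succ)) :
    Relation.ReflTransGen (DStep ω) u v := by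
  obtain ⟨k, p, -, h0, hl, hs⟩ := h
  have key : ∀ n (hn : n < k + 1), Relation.ReflTransGen (DStep ω) u (p ⟨n, hn⟩) := by
    intro n
    induction n with
    | zero => intro hn; exact h0 ▸ Relation.ReflTransGen.refl
    | succ n ihn =>
      intro hn
      have hnk : n < k := by omega
      have hstep := hs ⟨n, hnk⟩
      have e1 : (⟨n, hnk⟩ : Fin k).castSucc = (⟨n, by omega⟩ : Fin (k+1)) := rfl
      have e2 : (⟨n, hnk⟩ : Fin k).succ = (⟨n+1, hn⟩ : Fin (k+1)) := rfl
      rw [e1, e2] at hstep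
      exact (ihn (by omega)).tail hstep
  have := key k (by omega)
  rwa [show (⟨k, by omega⟩ : Fin (k+1)) = Fin.last k from rfl, hl] at this

end Aux
section Aux2

open Relation

variable {d : ℕ}

lemma zigzag_neg (hd : 1 ≤ d) (ω : Site d → Bool) :
    ∀ (m : ℕ) (x z : Fin d → ℤ), l1 z x ≤ (m:ℤ) → l1 z x % 2 = (m:ℤ) % 2 →
      Relation.ReflTransGen (DStep ω) ((x, -(m:ℤ)) : Site d) ((z, (0:ℤ)) : Site d) := by
  intro m
  induction m with
  | zero =>
    intro x z h1 h2
    have h0 : l1 z x = 0 := le_antisymm (by exact_mod_cast h1) (l1_nonneg z x)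
    have hz : z = x := l1_eq_zero h0
    subst hz
    norm_num
    exact Relation.ReflTransGen.refl
  | succ m ih =>
    intro x z h1 h2
    push_cast at h1 h2
    obtain ⟨x₁, hd1, hle, hpar⟩ :
        ∃ x₁, l1 x₁ x = 1 ∧ l1 z x₁ ≤ (m:ℤ) ∧ l1 z x₁ % 2 = (m:ℤ) % 2 := by
      by_cases h0 : l1 z x = 0
      · have hz : z = x := l1_eq_zero h0
        subst hz
        rw [l1_self] at h1 h2
        refine ⟨Function.update z ⟨0, hd⟩ (z ⟨0, hd⟩ + 1), ?_, ?_, ?_⟩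
        · rw [l1_update_left]; simp
        · rw [l1_update, l1_self]; simp; omega
        · rw [l1_update, l1_self]; simp; omega
      · obtain ⟨j, hj⟩ : ∃ j, z j ≠ x j := by
          by_contra hcon
          push_neg at hcon
          exact h0 (by rw [funext hcon]; exact l1_self x)
        set s : ℤ := if x j < z j then 1 else -1 with hs
        have habs : |z j - (x j + s)| = |z j - x j| - 1 := by
          by_cases hlt : x j < z j
          · rw [hs, if_pos hlt, abs_of_nonneg (by omega : (0:ℤ) ≤ z j - (x j + 1)),
              abs_of_pos (by omega : (0:ℤ) < z j - x j)]
            ring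
          · have hgt : z j < x j := by
              rcases lt_or_ge (z j) (x j) with h | h
              · exact h
              · exact absurd (by omega : z j = x j) hj
            rw [hs, if_neg hlt, abs_of_nonpos (by omega : z j - (x j + -1) ≤ 0),
              abs_of_neg (by omega : z j - x j < 0)]
            ring
        refine ⟨Function.update x j (x j + s), ?_, ?_, ?_⟩
        · rw [l1_update_left]
          rw [hs]
          split_ifs <;> norm_num
        · rw [l1_update, habs]
          have := l1_nonneg z x
          omega
        · rw [l1_update, habs]
          omega
    have hstep : DStep ω ((x, -((m:ℤ)+1)) : Site d) ((x₁, -(m:ℤ)) : Site d) := by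
      refine Or.inr ⟨hd1, ?_, by omega⟩
      have he : (-((m:ℤ)+1)) - (-(m:ℤ)) = -1 := by ring
      show (-((m:ℤ)+1)) - (-(m:ℤ)) ∈ signSet (-((m:ℤ)+1))
      rw [he]
      exact neg_one_mem_signSet (by omega)
    have hgoal := Relation.ReflTransGen.head hstep (ih x₁ z hle hpar)
    have : ((x, -(((m:ℕ)+1 : ℕ):ℤ)) : Site d) = ((x, -((m:ℤ)+1)) : Site d) := by
      push_cast; ring_nf
    rw [show ((m+1 : ℕ):ℤ) = (m:ℤ)+1 from by push_cast; ring]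
    exact hgoal

lemma zigzag_pos (hd : 1 ≤ d) (ω : Site d → Bool) :
    ∀ (m : ℕ) (x z : Fin d → ℤ), l1 z x ≤ (m:ℤ) → l1 z x % 2 = (m:ℤ) % 2 →
      Relation.ReflTransGen (DStep ω) ((x, (m:ℤ)) : Site d) ((z, (0:ℤ)) : Site d) := by
  intro m
  induction m with
  | zero =>
    intro x z h1 h2
    have h0 : l1 z x = 0 := le_antisymm (by exact_mod_cast h1) (l1_nonneg z x)
    have hz : z = x := l1_eq_zero h0
    subst hz
    norm_num
    exact Relation.ReflTransGen.refl
  | succ m ih =>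
    intro x z h1 h2
    push_cast at h1 h2
    obtain ⟨x₁, hd1, hle, hpar⟩ :
        ∃ x₁, l1 x₁ x = 1 ∧ l1 z x₁ ≤ (m:ℤ) ∧ l1 z x₁ % 2 = (m:ℤ) % 2 := by
      by_cases h0 : l1 z x = 0
      · have hz : z = x := l1_eq_zero h0
        subst hz
        rw [l1_self] at h1 h2
        refine ⟨Function.update z ⟨0, hd⟩ (z ⟨0, hd⟩ + 1), ?_, ?_, ?_⟩
        · rw [l1_update_left]; simp
        · rw [l1_update, l1_self]; simp; omega
        · rw [l1_update, l1_self]; simp; omega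
      · obtain ⟨j, hj⟩ : ∃ j, z j ≠ x j := by
          by_contra hcon
          push_neg at hcon
          exact h0 (by rw [funext hcon]; exact l1_self x)
        set s : ℤ := if x j < z j then 1 else -1 with hs
        have habs : |z j - (x j + s)| = |z j - x j| - 1 := by
          by_cases hlt : x j < z j
          · rw [hs, if_pos hlt, abs_of_nonneg (by omega : (0:ℤ) ≤ z j - (x j + 1)),
              abs_of_pos (by omega : (0:ℤ) < z j - x j)]
            ring
          · have hgt : z j < x j := by
              rcases lt_or_ge (z j) (x j) with h | h
              · exact h
              · exact absurd (by omega : z j = x j) hj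
            rw [hs, if_neg hlt, abs_of_nonpos (by omega : z j - (x j + -1) ≤ 0),
              abs_of_neg (by omega : z j - x j < 0)]
            ring
        refine ⟨Function.update x j (x j + s), ?_, ?_, ?_⟩
        · rw [l1_update_left]
          rw [hs]
          split_ifs <;> norm_num
        · rw [l1_update, habs]
          have := l1_nonneg z x
          omega
        · rw [l1_update, habs]
          omega
    have hstep : DStep ω ((x, (m:ℤ)+1) : Site d) ((x₁, (m:ℤ)) : Site d) := by
      refine Or.inr ⟨hd1, ?_, by omega⟩
      have he : ((m:ℤ)+1) - (m:ℤ) = 1 := by ring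
      show ((m:ℤ)+1) - ((m:ℤ)) ∈ signSet ((m:ℤ)+1)
      rw [he]
      exact one_mem_signSet (by omega)
    have hgoal := Relation.ReflTransGen.head hstep (ih x₁ z hle hpar)
    rw [show ((m+1 : ℕ):ℤ) = (m:ℤ)+1 from by push_cast; ring]
    exact hgoal

lemma reach_zero_neg (hd : 1 ≤ d) (ω : Site d → Bool) {u v : Site d} (hu : u.2 = 0)
    (hw : Relation.ReflTransGen (DStep ω) u v) :
    ∀ z : Fin d → ℤ, v.2 < 0 → l1 z v.1 ≤ -v.2 →
      Relation.ReflTransGen (DStep ω) u ((z, (0:ℤ)) : Site d) := by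
  induction hw with
  | refl => intro z hv _; exfalso; omega
  | @tail w c hab hbc ih =>
    intro z hv hz
    by_cases hpar : l1 z c.1 % 2 = (-c.2) % 2
    · have hm : (((-c.2).toNat : ℕ) : ℤ) = -c.2 := Int.toNat_of_nonneg (by omega)
      have hzig := zigzag_neg hd ω (-c.2).toNat c.1 z (by omega) (by omega)
      have hc : ((c.1, -(((-c.2).toNat : ℕ) : ℤ)) : Site d) = c := by
        refine Prod.ext_iff.mpr ⟨rfl, ?_⟩
        show -(((-c.2).toNat : ℕ) : ℤ) = c.2
        omega
      rw [hc] at hzig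
      exact (hab.tail hbc).trans hzig
    · have hz' : l1 z c.1 ≤ -c.2 - 1 := by omega
      rcases hbc with ⟨hq1, hsign, hωc⟩ | ⟨hq1, hsign, hb0⟩
      · rcases signSet_elim hsign with ⟨he, hb⟩ | ⟨he, hb⟩
        · exfalso; omega
        · rcases eq_or_lt_of_le hb with hb0 | hbneg
          · have hzc : z = c.1 := l1_eq_zero (le_antisymm (by omega) (l1_nonneg _ _))
            have : ((z, (0:ℤ)) : Site d) = w :=
              Prod.ext_iff.mpr ⟨hzc.trans hq1, hb0.symm⟩
            rw [this]; exact hab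
          · refine ih z (by omega) ?_
            rw [← hq1]
            omega
      · rcases signSet_elim hsign with ⟨he, hb⟩ | ⟨he, hb⟩
        · exfalso; omega
        · refine ih z (by omega) ?_
          have := l1_triangle z c.1 w.1
          omega

lemma reach_zero_pos (hd : 1 ≤ d) (ω : Site d → Bool) {u v : Site d} (hu : u.2 = 0)
    (hw : Relation.ReflTransGen (DStep ω) u v) :
    ∀ z : Fin d → ℤ, 0 < v.2 → l1 z v.1 ≤ v.2 →
      Relation.ReflTransGen (DStep ω) u ((z, (0:ℤ)) : Site d) := by
  induction hw with
  | refl => intro z hv _; exfalso; omega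
  | @tail w c hab hbc ih =>
    intro z hv hz
    by_cases hpar : l1 z c.1 % 2 = c.2 % 2
    · have hm : ((c.2.toNat : ℕ) : ℤ) = c.2 := Int.toNat_of_nonneg (by omega)
      have hzig := zigzag_pos hd ω c.2.toNat c.1 z (by omega) (by omega)
      have hc : ((c.1, ((c.2.toNat : ℕ) : ℤ)) : Site d) = c := by
        refine Prod.ext_iff.mpr ⟨rfl, ?_⟩
        show ((c.2.toNat : ℕ) : ℤ) = c.2
        omega
      rw [hc] at hzig
      exact (hab.tail hbc).trans hzig
    · have hz' : l1 z c.1 ≤ c.2 - 1 := by omega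
      rcases hbc with ⟨hq1, hsign, hωc⟩ | ⟨hq1, hsign, hb0⟩
      · rcases signSet_elim hsign with ⟨he, hb⟩ | ⟨he, hb⟩
        · rcases eq_or_lt_of_le hb with hb0 | hbpos
          · have hzc : z = c.1 := l1_eq_zero (le_antisymm (by omega) (l1_nonneg _ _))
            have : ((z, (0:ℤ)) : Site d) = w :=
              Prod.ext_iff.mpr ⟨hzc.trans hq1, hb0⟩
            rw [this]; exact hab
          · refine ih z (by omega) ?_
            rw [← hq1]
            omega
        · exfalso; omega
      · rcases signSet_elim hsign with ⟨he, hb⟩ | ⟨he, hb⟩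
        · refine ih z (by omega) ?_
          have := l1_triangle z c.1 w.1
          omega
        · exfalso; omega

end Aux2
section Aux3

open Relation

variable {d : ℕ}

lemma self_mem_mountain (ω : Site d → Bool) (b : Fin d → ℤ) (hb : ω (b, 0) = true) :
    ((b, (0:ℤ)) : Site d) ∈ mountain ω (b, 0) := by
  have hpath : IsDPath ω (b, 0) (b, 0) :=
    ⟨rfl, hb, 0, fun _ => (b, 0), fun a b _ => Fin.ext (by omega), rfl, rfl, fun i => i.elim0⟩
  have hr : reaches ω (b, 0) (b, 0) := ⟨(b, 0), ⟨rfl, by norm_num, by norm_num⟩, hpath⟩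
  exact ⟨(b, 0), rfl, hr, hr⟩

lemma mem_mountain_up (hd : 1 ≤ d) (ω : Site d → Bool) (b : Fin d → ℤ) (n : ℕ)
    (hn : ((b, (n:ℤ)) : Site d) ∈ mountain ω (b, 0))
    (hcl : ω (b, (n:ℤ)+1) = true) :
    ((b, (n:ℤ)+1) : Site d) ∈ mountain ω (b, 0) := by
  obtain ⟨u, hu2, hb0, w, hwhat, hpath⟩ := hn
  obtain ⟨hwb, hwsign, hwabs⟩ := hwhat
  have hwsign' : (0:ℤ) ≤ (n:ℤ) * w.2 := hwsign
  have hwabs' : |(n:ℤ)| ≤ |w.2| := hwabs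
  have hu0 : u.2 = 0 := hpath.1
  have hωu : ω u = true := hpath.2.1
  have hwalk : Relation.ReflTransGen (DStep ω) u w := path_to_walk ω hpath.2.2
  refine ⟨u, hu2, hb0, ?_⟩
  by_cases hge : (n:ℤ)+1 ≤ w.2
  · refine ⟨w, ⟨hwb, ?_, ?_⟩, hpath⟩
    · exact mul_nonneg (by positivity) (by omega)
    · rw [abs_of_nonneg (by positivity : (0:ℤ) ≤ (n:ℤ)+1), abs_of_nonneg (by omega : (0:ℤ) ≤ w.2)]
      omega
  · have hwalk0 : Relation.ReflTransGen (DStep ω) u ((b, (n:ℤ)) : Site d) := by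
      rcases Nat.eq_zero_or_pos n with hn0 | hnpos
      · subst hn0
        rcases lt_trichotomy w.2 0 with hneg | h0 | hpos
        · have := reach_zero_neg hd ω hu0 hwalk b hneg (by rw [hwb, l1_self]; omega)
          simpa using this
        · have hww : w = ((b, ((0:ℕ):ℤ)) : Site d) := Prod.ext_iff.mpr ⟨hwb, by simpa using h0⟩
          rw [← hww]; exact hwalk
        · exfalso; push_cast at hge; omega
      · have hnn : (0:ℤ) < (n:ℤ) := by exact_mod_cast hnpos
        have hw2 : w.2 = (n:ℤ) := by
          have h1 : 0 ≤ w.2 := by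
            by_contra hneg
            push_neg at hneg
            have : (n:ℤ) * w.2 < 0 := mul_neg_of_pos_of_neg hnn hneg
            omega
          have h2 : (n:ℤ) ≤ w.2 := by
            rwa [abs_of_nonneg (le_of_lt hnn), abs_of_nonneg h1] at hwabs'
          omega
        have hww : w = ((b, (n:ℤ)) : Site d) := Prod.ext_iff.mpr ⟨hwb, hw2⟩
        rw [← hww]; exact hwalk
    have hstep : DStep ω ((b, (n:ℤ)) : Site d) ((b, (n:ℤ)+1) : Site d) := by
      refine Or.inl ⟨rfl, ?_, hcl⟩
      show ((n:ℤ)+1) - (n:ℤ) ∈ signSet (n:ℤ)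
      rw [show ((n:ℤ)+1) - (n:ℤ) = 1 from by ring]
      exact one_mem_signSet (by positivity)
    exact ⟨((b, (n:ℤ)+1) : Site d), ⟨rfl, mul_self_nonneg _, le_refl _⟩,
      hu0, hωu, walk_to_path ω (hwalk0.tail hstep)⟩

lemma mem_mountain_down (hd : 1 ≤ d) (ω : Site d → Bool) (b : Fin d → ℤ) (n : ℕ)
    (hn : ((b, -(n:ℤ)) : Site d) ∈ mountain ω (b, 0))
    (hcl : ω (b, -(n:ℤ)-1) = true) :
    ((b, -(n:ℤ)-1) : Site d) ∈ mountain ω (b, 0) := by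
  obtain ⟨u, hu2, hb0, w, hwhat, hpath⟩ := hn
  obtain ⟨hwb, hwsign, hwabs⟩ := hwhat
  have hwsign' : (0:ℤ) ≤ -(n:ℤ) * w.2 := hwsign
  have hwabs' : |(-(n:ℤ))| ≤ |w.2| := hwabs
  have hu0 : u.2 = 0 := hpath.1
  have hωu : ω u = true := hpath.2.1
  have hwalk : Relation.ReflTransGen (DStep ω) u w := path_to_walk ω hpath.2.2
  refine ⟨u, hu2, hb0, ?_⟩
  by_cases hge : w.2 ≤ -(n:ℤ)-1
  · refine ⟨w, ⟨hwb, ?_, ?_⟩, hpath⟩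
    · rw [show (-(n:ℤ)-1) * w.2 = ((n:ℤ)+1) * (-w.2) from by ring]
      exact mul_nonneg (by positivity) (by omega)
    · rw [abs_of_nonpos (by omega : -(n:ℤ)-1 ≤ 0), abs_of_nonpos (by omega : w.2 ≤ 0)]
      omega
  · have hwalk0 : Relation.ReflTransGen (DStep ω) u ((b, -(n:ℤ)) : Site d) := by
      rcases Nat.eq_zero_or_pos n with hn0 | hnpos
      · subst hn0
        rcases lt_trichotomy w.2 0 with hneg | h0 | hpos
        · exfalso; push_cast at hge; omega
        · have hww : w = ((b, -((0:ℕ):ℤ)) : Site d) := Prod.ext_iff.mpr ⟨hwb, by simpa using h0⟩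
          rw [← hww]; exact hwalk
        · have := reach_zero_pos hd ω hu0 hwalk b hpos (by rw [hwb, l1_self]; omega)
          simpa using this
      · have hnn : (0:ℤ) < (n:ℤ) := by exact_mod_cast hnpos
        have hw2 : w.2 = -(n:ℤ) := by
          have h1 : w.2 ≤ 0 := by
            by_contra hpos
            push_neg at hpos
            have : -(n:ℤ) * w.2 < 0 := mul_neg_of_neg_of_pos (by omega) hpos
            omega
          have h2 : (n:ℤ) ≤ -w.2 := by
            rw [abs_of_nonpos (by omega : -(n:ℤ) ≤ 0), abs_of_nonpos h1] at hwabs'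
            omega
          omega
        have hww : w = ((b, -(n:ℤ)) : Site d) := Prod.ext_iff.mpr ⟨hwb, hw2⟩
        rw [← hww]; exact hwalk
    have hstep : DStep ω ((b, -(n:ℤ)) : Site d) ((b, -(n:ℤ)-1) : Site d) := by
      refine Or.inl ⟨rfl, ?_, hcl⟩
      show (-(n:ℤ)-1) - (-(n:ℤ)) ∈ signSet (-(n:ℤ))
      rw [show (-(n:ℤ)-1) - (-(n:ℤ)) = -1 from by ring]
      exact neg_one_mem_signSet (by omega)
    exact ⟨((b, -(n:ℤ)-1) : Site d), ⟨rfl, mul_self_nonneg _, le_refl _⟩,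
      hu0, hωu, walk_to_path ω (hwalk0.tail hstep)⟩

lemma sup_facts {S : Set ℕ} (h0 : 0 ∈ S) (hfin : (⨆ k ∈ S, (k:ℕ∞)) ≠ ⊤) :
    (⨆ k ∈ S, (k:ℕ∞)).toNat ∈ S ∧ ((⨆ k ∈ S, (k:ℕ∞)).toNat + 1) ∉ S := by
  set m := ⨆ k ∈ S, (k:ℕ∞) with hm
  have hcoe : ((m.toNat : ℕ) : ℕ∞) = m := ENat.coe_toNat hfin
  have hub : ∀ k ∈ S, k ≤ m.toNat := by
    intro k hk
    have h1 : (k:ℕ∞) ≤ m := le_iSup₂ (f := fun (k:ℕ) (_ : k ∈ S) => (k:ℕ∞)) k hk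
    rw [← hcoe] at h1
    exact_mod_cast h1
  constructor
  · by_contra hmem
    rcases Nat.eq_zero_or_pos m.toNat with h | hpos
    · exact hmem (h ▸ h0)
    · have hb : ∀ k ∈ S, k ≤ m.toNat - 1 := by
        intro k hk
        have h1 := hub k hk
        have h2 : k ≠ m.toNat := fun he => hmem (he ▸ hk)
        omega
      have hle : m ≤ ((m.toNat - 1 : ℕ) : ℕ∞) :=
        iSup₂_le fun k hk => by exact_mod_cast hb k hk
      have h3 : ((m.toNat : ℕ) : ℕ∞) ≤ ((m.toNat - 1 : ℕ) : ℕ∞) := le_trans (le_of_eq hcoe) hle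
      have := (Nat.cast_le (α := ℕ∞)).mp h3
      omega
  · intro h
    have := hub _ h
    omega

end Aux3
/-- If the mountain around `(b,0)` is empty, or it is nonempty with finite
positive depth, then the site `(b, F₊(b))` is open; likewise for `F₋` with the negative depth. -/
theorem site_at_F_is_open
    (d : ℕ) (hd : 1 ≤ d) (ω : Site d → Bool) (b : Fin d → ℤ) :
    ((mountain ω (b, 0) = ∅ ∨
        ((mountain ω (b, 0)).Nonempty ∧
          depthPlus ((b, 0) : Site d) (mountain ω (b, 0)) ≠ ⊤)) →
      ω (b, Fplus ω b) = false) ∧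
    ((mountain ω (b, 0) = ∅ ∨
        ((mountain ω (b, 0)).Nonempty ∧
          depthMinus ((b, 0) : Site d) (mountain ω (b, 0)) ≠ ⊤)) →
      ω (b, Fminus ω b) = false) := by
  constructor
  · rintro (hemp | ⟨hne, hfin⟩)
    · have hne' : ¬ (mountain ω (b, 0)).Nonempty := by
        rw [hemp]; exact Set.not_nonempty_empty
      have hF : Fplus ω b = 0 := by unfold Fplus; rw [if_neg hne']
      rw [hF]
      cases hcl : ω (b, (0:ℤ)) with
      | false => rfl
      | true =>
        exfalso
        have := self_mem_mountain ω b hcl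
        rw [hemp] at this
        exact this
    · have hdep : depthPlus ((b, 0) : Site d) (mountain ω (b, 0))
          = ⨆ k ∈ {k : ℕ | ((b, (k:ℤ)) : Site d) ∈ mountain ω (b, 0)}, (k : ℕ∞) := by
        unfold depthPlus
        norm_num
        rfl
      have h0S : 0 ∈ {k : ℕ | ((b, (k:ℤ)) : Site d) ∈ mountain ω (b, 0)} := by
        obtain ⟨w, u, hu2, hb0, hw⟩ := hne
        show ((b, ((0:ℕ):ℤ)) : Site d) ∈ mountain ω (b, 0)
        norm_num
        exact ⟨u, hu2, hb0, hb0⟩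
      have hfin' : (⨆ k ∈ {k : ℕ | ((b, (k:ℤ)) : Site d) ∈ mountain ω (b, 0)}, (k : ℕ∞)) ≠ ⊤ := by
        rw [← hdep]; exact hfin
      obtain ⟨hmem, hnot⟩ := sup_facts h0S hfin'
      set n := (⨆ k ∈ {k : ℕ | ((b, (k:ℤ)) : Site d) ∈ mountain ω (b, 0)}, (k : ℕ∞)).toNat with hn
      have hF : Fplus ω b = 1 + (n:ℤ) := by
        unfold Fplus
        rw [if_pos hne, hdep]
      rw [hF]
      cases hcl : ω (b, 1 + (n:ℤ)) with
      | false => rfl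
      | true =>
        exfalso
        have hup := mem_mountain_up hd ω b n hmem
          (by rw [show (n:ℤ)+1 = 1 + (n:ℤ) from by ring]; exact hcl)
        apply hnot
        show ((b, ((n+1:ℕ):ℤ)) : Site d) ∈ mountain ω (b, 0)
        rw [show ((n+1:ℕ):ℤ) = (n:ℤ)+1 from by push_cast; ring]
        exact hup
  · rintro (hemp | ⟨hne, hfin⟩)
    · have hne' : ¬ (mountain ω (b, 0)).Nonempty := by
        rw [hemp]; exact Set.not_nonempty_empty
      have hF : Fminus ω b = 0 := by unfold Fminus; rw [if_neg hne']
      rw [hF]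
      cases hcl : ω (b, (0:ℤ)) with
      | false => rfl
      | true =>
        exfalso
        have := self_mem_mountain ω b hcl
        rw [hemp] at this
        exact this
    · have hdep : depthMinus ((b, 0) : Site d) (mountain ω (b, 0))
          = ⨆ k ∈ {k : ℕ | ((b, -(k:ℤ)) : Site d) ∈ mountain ω (b, 0)}, (k : ℕ∞) := by
        unfold depthMinus
        norm_num
        rfl
      have h0S : 0 ∈ {k : ℕ | ((b, -(k:ℤ)) : Site d) ∈ mountain ω (b, 0)} := by
        obtain ⟨w, u, hu2, hb0, hw⟩ := hne
        show ((b, -((0:ℕ):ℤ)) : Site d) ∈ mountain ω (b, 0)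
        norm_num
        exact ⟨u, hu2, hb0, hb0⟩
      have hfin' : (⨆ k ∈ {k : ℕ | ((b, -(k:ℤ)) : Site d) ∈ mountain ω (b, 0)}, (k : ℕ∞)) ≠ ⊤ := by
        rw [← hdep]; exact hfin
      obtain ⟨hmem, hnot⟩ := sup_facts h0S hfin'
      set n := (⨆ k ∈ {k : ℕ | ((b, -(k:ℤ)) : Site d) ∈ mountain ω (b, 0)}, (k : ℕ∞)).toNat with hn
      have hF : Fminus ω b = -1 - (n:ℤ) := by
        unfold Fminus
        rw [if_pos hne, hdep]
      rw [hF]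
      cases hcl : ω (b, -1 - (n:ℤ)) with
      | false => rfl
      | true =>
        exfalso
        have hup := mem_mountain_down hd ω b n hmem
          (by rw [show -(n:ℤ)-1 = -1 - (n:ℤ) from by ring]; exact hcl)
        apply hnot
        show ((b, -((n+1:ℕ):ℤ)) : Site d) ∈ mountain ω (b, 0)
        rw [show -((n+1:ℕ):ℤ) = -(n:ℤ)-1 from by push_cast; ring]
        exact hup

end
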